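/- Let (β₁,...,β_{2^L}) be a Cantor basis of GF(2^{2^L}) with subspaces W_i = span(β₁,...,β_i), and let ϖ_n denote the n-th element in the induced lexicographic enumeration. Let 1 < m ≤ 2^L, l = ⌈log₂ m⌉, a ∈ W_{2^L} \ W_m, and b = a^{2^{2^{l-1}}} - a. Let f be a polynomial over GF(2^{2^L}) of degree < 2^m. For 0 ≤ i < 2^{2^{l-1}} and 0 ≤ j < 2^{m - 2^{l-1}}, let a_j = a + ϖ_{j·2^{2^{l-1}}} and let r_j be the remainder of f modulo x^{2^{2^{l-1}}} - x - (b + ϖ_j). Then f(a + ϖ_{i + j·2^{2^{l-1}}}) = r_j(a_j + ϖ_i). -/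

import Mathlib

/-!
In characteristic 2 squaring is additive, so the Cantor relation `β_t² = β_t + β_{t-1}` iterates
to `β_t ^ 2^(2^k) = β_t + β_{t-2^k}`. Summing over the binary digits of `n`
gives `ϖ_n ^ 2^(2^k) = ϖ_n + ϖ_{⌊n / 2^(2^k)⌋}`. With `s = 2^(l-1)` the point
`a + ϖ_{i + j·2^s}` is therefore a root of `x^(2^s) - x - (b + ϖ_j)`, so `f` and its remainder
modulo this polynomial agree there; and `a + ϖ_{i + j·2^s} = a_j + ϖ_i` because the digits of `i`
and of `j·2^s` do not overlap.
-/

open Polynomial Finset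

section Cantor

variable {K : Type*}

/-- The paper's `β₁, …, β_N` as a function on `ℕ`, with `β₀ = 0` and `β_t = 0` for `t > N`. -/
def oneIndexed {N : ℕ} [Zero K] (β : Fin N → K) : ℕ → K
  | 0 => 0
  | t + 1 => if h : t < N then β ⟨t, h⟩ else 0

def cantorEnum [AddCommMonoid K] (N : ℕ) (B : ℕ → K) (n : ℕ) : K :=
  ∑ t ∈ range N, if n.testBit t then B (t + 1) else 0

section AddCommMonoid

variable [AddCommMonoid K]

lemma cantorEnum_oneIndexed {N : ℕ} (β : Fin N → K) (n : ℕ) :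
    cantorEnum N (oneIndexed β) n = ∑ t : Fin N, if n.testBit t then β t else 0 := by
  rw [cantorEnum, ← Fin.sum_univ_eq_sum_range]
  simp [oneIndexed]

lemma cantorEnum_add_mul_two_pow (N : ℕ) (B : ℕ → K) {s i : ℕ} (hi : i < 2 ^ s) (j : ℕ) :
    cantorEnum N B (i + j * 2 ^ s) = cantorEnum N B i + cantorEnum N B (j * 2 ^ s) := by
  rw [cantorEnum, cantorEnum, cantorEnum, ← sum_add_distrib]
  refine sum_congr rfl fun t _ => ?_
  rw [mul_comm j, add_comm i, Nat.testBit_two_pow_mul_add j hi, Nat.testBit_two_pow_mul]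
  by_cases hts : t < s
  · simp [hts, not_le.2 hts]
  · have hit : i.testBit t = false :=
      Nat.testBit_lt_two_pow (hi.trans_le (Nat.pow_le_pow_right two_pos (not_lt.1 hts)))
    simp [hts, hit, not_lt.1 hts]

lemma cantorEnum_div_two_pow {N : ℕ} {B : ℕ → K} (hB : B 0 = 0) {s n : ℕ} (hs : s ≤ N)
    (hn : n < 2 ^ N) :
    cantorEnum N B (n / 2 ^ s) = ∑ t ∈ range N, if n.testBit t then B (t + 1 - s) else 0 := by
  have hlow : ∑ t ∈ range s, (if n.testBit t then B (t + 1 - s) else 0) = 0 :=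
    sum_eq_zero fun t ht => by rw [Nat.sub_eq_zero_of_le (mem_range.1 ht), hB, ite_self]
  have hhigh : ∑ t ∈ range s, (if n.testBit (N - s + t + s) then B (N - s + t + 1) else 0) = 0 :=
    sum_eq_zero fun t _ => by
      rw [Nat.testBit_lt_two_pow (hn.trans_le (Nat.pow_le_pow_right two_pos (by omega)))]
      rfl
  conv_lhs => rw [cantorEnum, ← Nat.sub_add_cancel hs, sum_range_add]
  conv_rhs => rw [← Nat.add_sub_cancel' hs, sum_range_add, hlow, zero_add]
  simp only [Nat.testBit_div_two_pow, hhigh, add_zero]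
  refine sum_congr rfl fun t _ => ?_
  rw [add_comm s t, add_right_comm, Nat.add_sub_cancel]

end AddCommMonoid

variable [CommRing K] {N : ℕ} {B : ℕ → K}

structure IsCantorSeq (N : ℕ) (B : ℕ → K) : Prop where
  zero : B 0 = 0
  sq_succ : ∀ t < N, B (t + 1) ^ 2 = B (t + 1) + B t

lemma isCantorSeq_oneIndexed {β : Fin N → K} (hN : 0 < N) (h1 : β ⟨0, hN⟩ = 1)
    (hsucc : ∀ i : ℕ, ∀ h : i + 1 < N, β ⟨i + 1, h⟩ ^ 2 - β ⟨i + 1, h⟩ = β ⟨i, by omega⟩) :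
    IsCantorSeq N (oneIndexed β) where
  zero := rfl
  sq_succ
    | 0, _ => by simp [oneIndexed, hN, h1]
    | t + 1, ht => by
      simpa [oneIndexed, ht, Nat.lt_of_succ_lt ht, sub_eq_iff_eq_add'] using hsucc t ht

variable [CharP K 2]

-- For `t < 2 ^ k` the subtraction truncates to `0`, and `B 0 = 0`.
lemma IsCantorSeq.pow_two_pow_two_pow (hB : IsCantorSeq N B) (k : ℕ) {t : ℕ} (ht : t ≤ N) :
    B t ^ 2 ^ 2 ^ k = B t + B (t - 2 ^ k) := by
  induction k generalizing t with
  | zero =>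
    rcases t with _ | t
    · simp [hB.zero]
    · simpa using hB.sq_succ t ht
  | succ k ih =>
    have hexp : 2 ^ 2 ^ (k + 1) = 2 ^ 2 ^ k * 2 ^ 2 ^ k := by rw [pow_succ, pow_mul, sq]
    rw [hexp, pow_mul, ih ht, add_pow_char_pow, ih ht, ih ((t.sub_le _).trans ht), Nat.sub_sub,
      ← two_mul, ← pow_succ']
    linear_combination CharTwo.add_self_eq_zero (B (t - 2 ^ k))

lemma IsCantorSeq.cantorEnum_pow_two_pow_two_pow (hB : IsCantorSeq N B) {k n : ℕ}
    (hk : 2 ^ k ≤ N) (hn : n < 2 ^ N) :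
    cantorEnum N B n ^ 2 ^ 2 ^ k = cantorEnum N B n + cantorEnum N B (n / 2 ^ 2 ^ k) := by
  rw [cantorEnum_div_two_pow hB.zero hk hn, cantorEnum, sum_pow_char_pow, ← sum_add_distrib]
  refine sum_congr rfl fun t ht => ?_
  rw [ite_pow, zero_pow (by positivity), hB.pow_two_pow_two_pow k (mem_range.1 ht), ite_add_ite,
    add_zero]

lemma IsCantorSeq.pow_sub_self_add_cantorEnum (hB : IsCantorSeq N B) {k i j : ℕ}
    (hk : 2 ^ k ≤ N) (hi : i < 2 ^ 2 ^ k) (hn : i + j * 2 ^ 2 ^ k < 2 ^ N) (a : K) :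
    (a + cantorEnum N B (i + j * 2 ^ 2 ^ k)) ^ 2 ^ 2 ^ k - (a + cantorEnum N B (i + j * 2 ^ 2 ^ k))
      = a ^ 2 ^ 2 ^ k - a + cantorEnum N B j := by
  have hdiv : (i + j * 2 ^ 2 ^ k) / 2 ^ 2 ^ k = j := by
    rw [Nat.add_mul_div_right _ _ (Nat.two_pow_pos _), Nat.div_eq_of_lt hi, zero_add]
  rw [add_pow_char_pow, hB.cantorEnum_pow_two_pow_two_pow hk hn, hdiv]
  ring

end Cantor

/-- Evaluation mechanism: with a Cantor basis of `GF(2^(2^L))`, subspaces `W`,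
and enumeration `ϖ`, let `1 < m ≤ 2^L`, `l = ⌈log₂ m⌉`, `a ∉ W m`,
`b = a^(2^(2^(l-1))) - a`, and `f` of degree `< 2^m`.  For
`i < 2^(2^(l-1))` and `j < 2^(m - 2^(l-1))`, with
`aⱼ = a + ϖ_{j·2^(2^(l-1))}` and `rⱼ` the remainder of `f` modulo
`x^(2^(2^(l-1))) - x - (b + ϖⱼ)`, one has
`f(a + ϖ_{i + j·2^(2^(l-1))}) = rⱼ(aⱼ + ϖᵢ)`. -/
theorem evaluation_mechanism (L : ℕ)
    (bβ : Module.Basis (Fin (2 ^ L)) (ZMod 2) (GaloisField 2 (2 ^ L)))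
    (hb1 : bβ ⟨0, by positivity⟩ = 1)
    (hbc : ∀ i : ℕ, ∀ h : i + 1 < 2 ^ L,
      (bβ ⟨i + 1, h⟩) ^ 2 - bβ ⟨i + 1, h⟩ = bβ ⟨i, by omega⟩)
    (ϖ : ℕ → GaloisField 2 (2 ^ L))
    (hϖ : ∀ n, ϖ n = ∑ t : Fin (2 ^ L), if n.testBit (t : ℕ) then bβ t else 0)
    (m l : ℕ) (hm2 : m ≤ 2 ^ L) (hl : l = Nat.clog 2 m)
    (a : GaloisField 2 (2 ^ L))
    (b : GaloisField 2 (2 ^ L)) (hb : b = a ^ (2 ^ (2 ^ (l - 1))) - a)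
    (f : Polynomial (GaloisField 2 (2 ^ L)))
    (i j : ℕ) (hi : i < 2 ^ (2 ^ (l - 1))) (hj : j < 2 ^ (m - 2 ^ (l - 1)))
    (aj : GaloisField 2 (2 ^ L)) (haj : aj = a + ϖ (j * 2 ^ (2 ^ (l - 1))))
    (r : Polynomial (GaloisField 2 (2 ^ L)))
    (hr : r = f %ₘ (X ^ (2 ^ (2 ^ (l - 1))) - X - C (b + ϖ j))) :
    f.eval (a + ϖ (i + j * 2 ^ (2 ^ (l - 1)))) = r.eval (aj + ϖ i) := by
  have hβ : IsCantorSeq (2 ^ L) (oneIndexed bβ) := isCantorSeq_oneIndexed _ hb1 hbc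
  have hϖ' : ϖ = cantorEnum (2 ^ L) (oneIndexed bβ) :=
    funext fun n => by rw [hϖ, cantorEnum_oneIndexed]
  have hk : 2 ^ (l - 1) ≤ 2 ^ L :=
    Nat.pow_le_pow_right two_pos ((l.sub_le 1).trans (hl ▸ Nat.clog_le_of_le_pow hm2))
  have hn : i + j * 2 ^ 2 ^ (l - 1) < 2 ^ 2 ^ L := calc
    _ < 2 ^ 2 ^ (l - 1) * 2 ^ (m - 2 ^ (l - 1)) :=
      mul_comm j _ ▸ Nat.add_mul_lt_mul_of_lt_of_lt hi hj
    _ ≤ 2 ^ 2 ^ L := by rw [← pow_add]; exact Nat.pow_le_pow_right two_pos (by omega)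
  have hroot :
      (X ^ 2 ^ 2 ^ (l - 1) - X - C (b + ϖ j)).eval (a + ϖ (i + j * 2 ^ 2 ^ (l - 1))) = 0 := by
    simp only [hϖ', eval_sub, eval_pow, eval_X, eval_C, hβ.pow_sub_self_add_cantorEnum hk hi hn,
      hb, sub_self]
  have hpoint : aj + ϖ i = a + ϖ (i + j * 2 ^ 2 ^ (l - 1)) := by
    rw [haj, hϖ', cantorEnum_add_mul_two_pow _ _ hi]
    ring
  rw [hpoint, hr]
  exact (eval₂_modByMonic_eq_self_of_root hroot).symm
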